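/- For every λ > 0, the unique solution (X_λ, Y_λ) of the system λX_λ + B₁(X_λ,Y_λ) = 0, λY_λ + B₂(X_λ,Y_λ) = 0 satisfies 0 ≤ X_λ ≤ √2 and −√2 ≤ Y_λ ≤ 0; in particular, the set {(X_λ,Y_λ) : λ > 0} is bounded in ℝ². -/

import Mathlib

/-!
Both components of `b` depend on `(u₁, u₂)` only through `d = u₁ - u₂`, and `b₂ = -b₁`. At the
smallest element `α₀ = 2 - √2` of `𝒜`, every `b₁(α₀, β, ·)` with `β ∈ [0, 1]` vanishes exactly at
`d = √2` and increases with `d`; monotonicity in `α` then gives `B₁ ≤ 0 ↔ d ≤ √2` and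
`0 ≤ B₂ ↔ d ≤ √2`. For a solution, `d > √2` would force `X < 0 < Y`, i.e. `d < 0`. Hence
`d ≤ √2`, so `X ≥ 0 ≥ Y`, and `X - Y ≤ √2` bounds both.
-/

open Real Filter Topology

/-- The 2×2 matrix C(α,β) from the paper. -/
noncomputable def Cmat (a b : ℝ) : Matrix (Fin 2) (Fin 2) ℝ :=
  1 + b • !![-a, -1 + a; -1 + a, -a] + (1 - b) • !![-1 + a, -a; -a, -1 + a]

/-- The running costs L₁, L₂. -/
noncomputable def Lfun (i : Fin 2) (a b : ℝ) : ℝ :=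
  if i = 0 then a * b + 2 * (1 - a) * (1 - b) else -(a * b) - 2 * (1 - a) * (1 - b)

/-- b_i(α,β,u₁,u₂) = c_{i1}(α,β)u₁ + c_{i2}(α,β)u₂ − L_i(α,β). -/
noncomputable def bfun (i : Fin 2) (a b u₁ u₂ : ℝ) : ℝ :=
  Cmat a b i 0 * u₁ + Cmat a b i 1 * u₂ - Lfun i a b

/-- A_i(u₁,u₂) = max_{α∈𝒜} min_{β∈ℬ} b_i(α,β,u₁,u₂). -/
noncomputable def Afun (As Bs : Set ℝ) (i : Fin 2) (u₁ u₂ : ℝ) : ℝ :=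
  sSup ((fun a => sInf ((fun b => bfun i a b u₁ u₂) '' Bs)) '' As)

/-- The set 𝒜 = {2 − √2 + 4^{−k} : k ≥ 1} ∪ {2 − √2}. -/
noncomputable def calA : Set ℝ :=
  {x | ∃ k : ℕ, 1 ≤ k ∧ x = 2 - Real.sqrt 2 + (4 : ℝ) ^ (-(k : ℤ))} ∪ {2 - Real.sqrt 2}

/-- The set ℬ = {0, 1}. -/
def calB : Set ℝ := {0, 1}

/-- B_i(u₁,u₂) = max_{α∈𝒜} min_{β∈ℬ} b_i(α,β,u₁,u₂). -/
noncomputable def Bop (i : Fin 2) (u₁ u₂ : ℝ) : ℝ := Afun calA calB i u₁ u₂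

open Set

theorem bounds_of_sign_iff {lam x y c B₀ B₁ : ℝ} (hlam : 0 < lam) (hc : 0 ≤ c)
    (h₀ : lam * x + B₀ = 0) (h₁ : lam * y + B₁ = 0)
    (hB₀ : B₀ ≤ 0 ↔ x - y ≤ c) (hB₁ : 0 ≤ B₁ ↔ x - y ≤ c) :
    0 ≤ x ∧ x ≤ c ∧ -c ≤ y ∧ y ≤ 0 := by
  have hd : x - y ≤ c := by
    by_contra hd
    have hx : x < 0 := by
      have : 0 < B₀ := lt_of_not_ge (mt hB₀.mp hd)
      nlinarith
    have hy : 0 < y := by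
      have : B₁ < 0 := lt_of_not_ge (mt hB₁.mp hd)
      nlinarith
    linarith
  have hx : 0 ≤ x := by nlinarith [hB₀.mpr hd]
  have hy : y ≤ 0 := by nlinarith [hB₁.mpr hd]
  exact ⟨hx, by linarith, by linarith, hy⟩

theorem bfun_zero_eq (a b u₁ u₂ : ℝ) :
    bfun 0 a b u₁ u₂ = (a + b - 2 * a * b) * (u₁ - u₂) - (a * b + 2 * (1 - a) * (1 - b)) := by
  simp only [bfun, Cmat, Lfun, Matrix.add_apply, Matrix.smul_apply, Matrix.of_apply,
    Matrix.cons_val', Matrix.cons_val_zero, Matrix.cons_val_one, Matrix.cons_val_fin_one, smul_eq_mul,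
    Matrix.one_apply_eq, Matrix.one_apply_ne zero_ne_one, if_true]
  ring

theorem bfun_one_eq_neg (a b u₁ u₂ : ℝ) : bfun 1 a b u₁ u₂ = -bfun 0 a b u₁ u₂ := by
  simp only [bfun, Cmat, Lfun, Matrix.add_apply, Matrix.smul_apply, Matrix.of_apply,
    Matrix.cons_val', Matrix.cons_val_zero, Matrix.cons_val_one, Matrix.cons_val_fin_one, smul_eq_mul,
    Matrix.one_apply_eq, Matrix.one_apply_ne one_ne_zero, Matrix.one_apply_ne zero_ne_one,
    one_ne_zero, if_false, if_true]
  ring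

theorem bfun_zero_two_sub_sqrt_two (b u₁ u₂ : ℝ) :
    bfun 0 (2 - √2) b u₁ u₂ = (2 - √2 + (2 * √2 - 3) * b) * (u₁ - u₂ - √2) := by
  rw [bfun_zero_eq]
  linear_combination (2 * b - 1) * sq_sqrt (zero_le_two : (0 : ℝ) ≤ 2)

theorem two_sub_sqrt_two_add_mul_pos {b : ℝ} (hb : b ∈ Icc 0 1) :
    0 < 2 - √2 + (2 * √2 - 3) * b := by
  nlinarith [hb.1, hb.2, one_lt_sqrt_two, sqrt_two_lt_three_halves]

theorem two_sub_sqrt_two_mem_calA : 2 - √2 ∈ calA := Or.inr rfl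

theorem calA_subset_Icc : calA ⊆ Icc (2 - √2) 1 := by
  rintro _ (⟨k, hk, rfl⟩ | rfl)
  · have hpow : (4 : ℝ) ^ (-(k : ℤ)) ≤ 1 / 4 :=
      (zpow_le_zpow_right₀ (by norm_num) (by omega : -(k : ℤ) ≤ -1)).trans_eq (by norm_num)
    have hpos : (0 : ℝ) < 4 ^ (-(k : ℤ)) := by positivity
    have hsqrt : 5 / 4 < √2 := by
      rw [lt_sqrt (by norm_num)]
      norm_num
    constructor <;> linarith
  · exact ⟨le_rfl, by linarith [one_lt_sqrt_two]⟩

theorem bfun_le_abs_add_two {a : ℝ} (ha : a ∈ Icc 0 1) (i : Fin 2) (u₁ u₂ : ℝ) :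
    bfun i a 0 u₁ u₂ ≤ |u₁ - u₂| + 2 := by
  have h : bfun i a 0 u₁ u₂ ≤ |bfun 0 a 0 u₁ u₂| := by
    fin_cases i
    · exact le_abs_self _
    · exact (bfun_one_eq_neg a 0 u₁ u₂).trans_le (neg_le_abs _)
  refine h.trans (abs_le.mpr ⟨?_, ?_⟩) <;> rw [bfun_zero_eq] <;>
    nlinarith [ha.1, ha.2, le_abs_self (u₁ - u₂), neg_abs_le (u₁ - u₂)]

section Afun

variable {As : Set ℝ} {i : Fin 2} {u₁ u₂ : ℝ}

theorem Afun_pair :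
    Afun As {0, 1} i u₁ u₂ = sSup ((fun a => min (bfun i a 0 u₁ u₂) (bfun i a 1 u₁ u₂)) '' As) := by
  simp only [Afun, image_pair, csInf_pair]

theorem le_Afun_pair (hAs : As ⊆ Icc 0 1) {a : ℝ} (ha : a ∈ As) :
    min (bfun i a 0 u₁ u₂) (bfun i a 1 u₁ u₂) ≤ Afun As {0, 1} i u₁ u₂ := by
  rw [Afun_pair]
  refine le_csSup ⟨|u₁ - u₂| + 2, ?_⟩ (mem_image_of_mem _ ha)
  rintro _ ⟨a', ha', rfl⟩
  exact (min_le_left _ _).trans (bfun_le_abs_add_two (hAs ha') i u₁ u₂)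

theorem Afun_pair_le (hAs : As.Nonempty) {c : ℝ}
    (h : ∀ a ∈ As, min (bfun i a 0 u₁ u₂) (bfun i a 1 u₁ u₂) ≤ c) :
    Afun As {0, 1} i u₁ u₂ ≤ c := by
  rw [Afun_pair]
  exact csSup_le (hAs.image _) (forall_mem_image.mpr h)

end Afun

theorem le_Bop {a : ℝ} (ha : a ∈ calA) (i : Fin 2) (u₁ u₂ : ℝ) :
    min (bfun i a 0 u₁ u₂) (bfun i a 1 u₁ u₂) ≤ Bop i u₁ u₂ :=
  le_Afun_pair
    (calA_subset_Icc.trans (Icc_subset_Icc (by linarith [sqrt_two_lt_three_halves]) le_rfl)) ha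

theorem Bop_le {i : Fin 2} {u₁ u₂ c : ℝ}
    (h : ∀ a ∈ calA, min (bfun i a 0 u₁ u₂) (bfun i a 1 u₁ u₂) ≤ c) : Bop i u₁ u₂ ≤ c :=
  Afun_pair_le ⟨_, two_sub_sqrt_two_mem_calA⟩ h

theorem Bop_zero_nonpos_iff (u₁ u₂ : ℝ) : Bop 0 u₁ u₂ ≤ 0 ↔ u₁ - u₂ ≤ √2 := by
  constructor
  · intro hB
    by_contra! hd
    have hpos : 0 < min (bfun 0 (2 - √2) 0 u₁ u₂) (bfun 0 (2 - √2) 1 u₁ u₂) := by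
      simp only [bfun_zero_two_sub_sqrt_two]
      exact lt_min (mul_pos (two_sub_sqrt_two_add_mul_pos (by simp)) (by linarith))
        (mul_pos (two_sub_sqrt_two_add_mul_pos (by simp)) (by linarith))
    linarith [le_Bop two_sub_sqrt_two_mem_calA 0 u₁ u₂]
  · intro hd
    refine Bop_le fun a ha => (min_le_right _ _).trans ?_
    obtain ⟨ha₀, ha₁⟩ := calA_subset_Icc ha
    rw [bfun_zero_eq]
    nlinarith [one_lt_sqrt_two, sq_sqrt (zero_le_two : (0 : ℝ) ≤ 2)]

theorem Bop_one_nonneg_iff (u₁ u₂ : ℝ) : 0 ≤ Bop 1 u₁ u₂ ↔ u₁ - u₂ ≤ √2 := by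
  constructor
  · intro hB
    by_contra! hd
    have hneg : Bop 1 u₁ u₂ ≤ 2 - (2 - √2) * (u₁ - u₂ + 2) := by
      refine Bop_le fun a ha => (min_le_left _ _).trans ?_
      obtain ⟨ha₀, -⟩ := calA_subset_Icc ha
      rw [bfun_one_eq_neg, bfun_zero_eq]
      nlinarith [one_lt_sqrt_two]
    -- `(2 - √2) * (2 + √2) = 2`
    nlinarith [sq_sqrt (zero_le_two : (0 : ℝ) ≤ 2), sqrt_two_lt_three_halves]
  · intro hd
    refine le_trans ?_ (le_Bop two_sub_sqrt_two_mem_calA 1 u₁ u₂)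
    simp only [bfun_one_eq_neg, bfun_zero_two_sub_sqrt_two, le_min_iff, Left.nonneg_neg_iff]
    exact ⟨mul_nonpos_of_nonneg_of_nonpos (two_sub_sqrt_two_add_mul_pos (by simp)).le (by linarith),
      mul_nonpos_of_nonneg_of_nonpos (two_sub_sqrt_two_add_mul_pos (by simp)).le (by linarith)⟩

theorem solution_bounds (X Y : ℝ → ℝ)
    (hsol : ∀ lam : ℝ, 0 < lam →
      lam * X lam + Bop 0 (X lam) (Y lam) = 0 ∧
      lam * Y lam + Bop 1 (X lam) (Y lam) = 0) :
    (∀ lam : ℝ, 0 < lam →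
      0 ≤ X lam ∧ X lam ≤ Real.sqrt 2 ∧ -Real.sqrt 2 ≤ Y lam ∧ Y lam ≤ 0) ∧
    Bornology.IsBounded {p : ℝ × ℝ | ∃ lam : ℝ, 0 < lam ∧ p = (X lam, Y lam)} := by
  have hbounds (lam : ℝ) (hlam : 0 < lam) :
      0 ≤ X lam ∧ X lam ≤ √2 ∧ -√2 ≤ Y lam ∧ Y lam ≤ 0 :=
    bounds_of_sign_iff hlam (sqrt_nonneg 2) (hsol lam hlam).1 (hsol lam hlam).2
      (Bop_zero_nonpos_iff _ _) (Bop_one_nonneg_iff _ _)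
  refine ⟨hbounds, ((Metric.isBounded_Icc 0 √2).prod (Metric.isBounded_Icc (-√2) 0)).subset ?_⟩
  rintro _ ⟨lam, hlam, rfl⟩
  obtain ⟨hx₀, hx₁, hy₀, hy₁⟩ := hbounds lam hlam
  exact ⟨⟨hx₀, hx₁⟩, hy₀, hy₁⟩
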